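/- arXiv:1011.5812 — 3 statements merged into one kernel-verified Lean document; each statement's English description precedes it below -/
import Mathlib

section
/- Let v ∈ L. For all x,y ∈ E and all t < t*(x), u < t*(y): |Hv(x,t) − Hv(y,u)| ≤ ([v]₁ + C_v C_{t*}[λ]₁)|x−y| + ([v]₂ + C_v(C_λ + α))|t−u|. -/
open MeasureTheory Filter Set

/-- The class **L** of functions continuous along the flow, with Lipschitz constants. -/
structure IsInL {d : ℕ} (E : Set (EuclideanSpace ℝ (Fin d)))
    (φ : EuclideanSpace ℝ (Fin d) → ℝ → EuclideanSpace ℝ (Fin d))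
    (tstar : EuclideanSpace ℝ (Fin d) → ℝ)
    (w : EuclideanSpace ℝ (Fin d) → ℝ) (Cw Lw1 Lw2 Lws : ℝ) : Prop where
  bdd : ∀ x ∈ E, |w x| ≤ Cw
  cont : ∀ x ∈ E, ContinuousOn (fun t => w (φ x t)) (Set.Ico 0 (tstar x))
  lim : ∀ x ∈ E, Filter.Tendsto (fun t => w (φ x t))
    (nhdsWithin (tstar x) (Set.Iio (tstar x))) (nhds (w (φ x (tstar x))))
  lip1 : ∀ x ∈ E, ∀ y ∈ E, ∀ u ∈ Set.Icc (0:ℝ) (min (tstar x) (tstar y)),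
    |w (φ x u) - w (φ y u)| ≤ Lw1 * ‖x - y‖
  lip2 : ∀ x ∈ E, ∀ t ∈ Set.Icc (0:ℝ) (tstar x), ∀ s ∈ Set.Icc (0:ℝ) (tstar x),
    |w (φ x t) - w (φ x s)| ≤ Lw2 * |t - s|
  lipstar : ∀ x ∈ E, ∀ y ∈ E,
    |w (φ x (tstar x)) - w (φ y (tstar y))| ≤ Lws * ‖x - y‖

lemma exp_neg_lip {a b : ℝ} (ha : 0 ≤ a) (hb : 0 ≤ b) :
    |Real.exp (-a) - Real.exp (-b)| ≤ |a - b| := by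
  wlog hab : b ≤ a generalizing a b
  · rw [abs_sub_comm, abs_sub_comm a b]; exact this hb ha (le_of_not_ge hab)
  have h1 : Real.exp (-a) ≤ Real.exp (-b) := Real.exp_le_exp.2 (by linarith)
  have h2 : Real.exp (-b) ≤ 1 := Real.exp_le_one_iff.2 (by linarith)
  have h3 : (b - a) + 1 ≤ Real.exp (b - a) := Real.add_one_le_exp _
  have h4 : Real.exp (-a) = Real.exp (-b) * Real.exp (b - a) := by
    rw [← Real.exp_add]; ring_nf
  have h5 : (0:ℝ) < Real.exp (-b) := Real.exp_pos _
  rw [abs_of_nonpos (by linarith), abs_of_nonneg (by linarith)]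
  nlinarith

lemma flow_mem_of_lt_tstar {d : ℕ} {E : Set (EuclideanSpace ℝ (Fin d))}
    (hE_open : IsOpen E)
    {φ : EuclideanSpace ℝ (Fin d) → ℝ → EuclideanSpace ℝ (Fin d)}
    (hφ_cont : Continuous fun p : EuclideanSpace ℝ (Fin d) × ℝ => φ p.1 p.2)
    (hφ_homeo : ∀ t : ℝ, ∃ h : EuclideanSpace ℝ (Fin d) ≃ₜ EuclideanSpace ℝ (Fin d), ∀ x, h x = φ x t)
    (hφ_group : ∀ x s t, φ x (t + s) = φ (φ x s) t)
    {tstar : EuclideanSpace ℝ (Fin d) → ℝ}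
    (htstar_def : ∀ x ∈ E, tstar x = sInf {t : ℝ | 0 < t ∧ φ x t ∈ frontier E})
    {y : EuclideanSpace ℝ (Fin d)} (hy : y ∈ E) {u : ℝ} (hu0 : 0 ≤ u)
    (hu : u < tstar y) : φ y u ∈ E := by
  have hzero : φ y 0 = y := by
    obtain ⟨h, hh⟩ := hφ_homeo 0
    have := hφ_group y 0 0
    rw [add_zero, ← hh, ← hh] at this
    exact (hh y ▸ (h.injective this) : y = φ y 0).symm
  have hpath : Continuous fun t : ℝ => φ y t :=
    hφ_cont.comp (continuous_const.prodMk continuous_id)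
  by_contra hnot
  set K : Set ℝ := Icc 0 u ∩ (fun t => φ y t) ⁻¹' Eᶜ with hK
  have hKne : K.Nonempty := ⟨u, ⟨hu0, le_refl u⟩, hnot⟩
  have hKcomp : IsCompact K :=
    isCompact_Icc.inter_right (hE_open.isClosed_compl.preimage hpath)
  have hτK : sInf K ∈ K := hKcomp.sInf_mem hKne
  set τ := sInf K with hτ
  have hτ0 : 0 ≤ τ := hτK.1.1
  have hτu : τ ≤ u := hτK.1.2
  have hτpos : 0 < τ := by
    rcases hτ0.lt_or_eq with h | h
    · exact h
    · exfalso; apply hτK.2; show φ y τ ∈ E; rw [← h, hzero]; exact hy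
  have hbefore : ∀ t, 0 ≤ t → t < τ → φ y t ∈ E := by
    intro t ht0 htτ
    by_contra hne
    have : t ∈ K := ⟨⟨ht0, htτ.le.trans hτu⟩, hne⟩
    exact absurd (csInf_le hKcomp.bddBelow this) (not_le.2 htτ)
  have hclos : φ y τ ∈ closure E := by
    have htend : Tendsto (fun t : ℝ => φ y t) (nhdsWithin τ (Iio τ)) (nhds (φ y τ)) :=
      (hpath.tendsto τ).mono_left nhdsWithin_le_nhds
    refine mem_closure_of_tendsto htend ?_
    filter_upwards [Ioo_mem_nhdsLT_of_mem (⟨hτpos, le_refl τ⟩ : τ ∈ Ioc 0 τ)] with t ht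
    exact hbefore t ht.1.le ht.2
  have hfront : φ y τ ∈ frontier E := by
    rw [hE_open.frontier_eq]
    exact ⟨hclos, hτK.2⟩
  have : tstar y ≤ τ := by
    rw [htstar_def y hy]
    exact csInf_le ⟨0, fun t ht => ht.1.le⟩ ⟨hτpos, hfront⟩
  linarith


theorem stmt_1
    {d : ℕ}
    (E : Set (EuclideanSpace ℝ (Fin d)))
    (hE_open : IsOpen E)
    (φ : EuclideanSpace ℝ (Fin d) → ℝ → EuclideanSpace ℝ (Fin d))
    (hφ_cont : Continuous fun p : EuclideanSpace ℝ (Fin d) × ℝ => φ p.1 p.2)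
    (hφ_homeo : ∀ t : ℝ, ∃ h : EuclideanSpace ℝ (Fin d) ≃ₜ EuclideanSpace ℝ (Fin d), ∀ x, h x = φ x t)
    (hφ_group : ∀ x s t, φ x (t + s) = φ (φ x s) t)
    (tstar : EuclideanSpace ℝ (Fin d) → ℝ)
    (htstar_def : ∀ x ∈ E, tstar x = sInf {t : ℝ | 0 < t ∧ φ x t ∈ frontier E})
    (Ctstar : ℝ) (htstar_bdd : ∀ x ∈ E, tstar x ≤ Ctstar)
    (Ltstar : ℝ) (htstar_lip : ∀ x ∈ E, ∀ y ∈ E, |tstar x - tstar y| ≤ Ltstar * ‖x - y‖)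
    (lam : EuclideanSpace ℝ (Fin d) → ℝ)
    (hlam_meas : Measurable lam)
    (hlam_nonneg : ∀ x, 0 ≤ lam x)
    (Clam : ℝ) (hlam_bdd : ∀ x, lam x ≤ Clam)
    (Llam : ℝ)
    (hlam_lip : ∀ x ∈ E, ∀ y ∈ E, ∀ u : ℝ, 0 ≤ u → u < min (tstar x) (tstar y) →
      |lam (φ x u) - lam (φ y u)| ≤ Llam * ‖x - y‖)
    (Lam : EuclideanSpace ℝ (Fin d) → ℝ → ℝ)
    (hLam_def : ∀ x t, Lam x t = ∫ s in (0:ℝ)..t, lam (φ x s))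
    (α : ℝ) (hα_pos : 0 < α)
    (v : EuclideanSpace ℝ (Fin d) → ℝ) (Cv Lv1 Lv2 Lvs : ℝ)
    (hv_L : IsInL E φ tstar v Cv Lv1 Lv2 Lvs)
    (H : (EuclideanSpace ℝ (Fin d) → ℝ) → EuclideanSpace ℝ (Fin d) → ℝ → ℝ)
    (hH_def : ∀ (g : EuclideanSpace ℝ (Fin d) → ℝ) (x : EuclideanSpace ℝ (Fin d)) (t : ℝ), H g x t =
      Real.exp (-(α * min t (tstar x)) - Lam x (min t (tstar x))) * g (φ x (min t (tstar x))))
    :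
    ∀ x ∈ E, ∀ y ∈ E, ∀ t u : ℝ, 0 ≤ t → t < tstar x → 0 ≤ u → u < tstar y →
      |H v x t - H v y u| ≤
        (Lv1 + Cv * Ctstar * Llam) * ‖x - y‖ + (Lv2 + Cv * (Clam + α)) * |t - u| := by
  
  intro x hx y hy t u ht0 htx hu0 huy
  have htx_pos : 0 < tstar x := lt_of_le_of_lt ht0 htx
  have hty_pos : 0 < tstar y := lt_of_le_of_lt hu0 huy
  set s := min t u with hs
  have hs0 : 0 ≤ s := le_min ht0 hu0
  have hst : s ≤ t := min_le_left _ _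
  have hsu : s ≤ u := min_le_right _ _
  have hsx : s < tstar x := lt_of_le_of_lt hst htx
  have hsy : s < tstar y := lt_of_le_of_lt hsu huy
  have hCts : tstar x ≤ Ctstar := htstar_bdd x hx
  have hmemy : φ y u ∈ E :=
    flow_mem_of_lt_tstar hE_open hφ_cont hφ_homeo hφ_group htstar_def hy hu0 huy
  have hCv : |v (φ y u)| ≤ Cv := hv_L.bdd _ hmemy
  have hLl0 : 0 ≤ Llam * ‖x - y‖ :=
    (abs_nonneg _).trans (hlam_lip x hx y hy 0 le_rfl (lt_min htx_pos hty_pos))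
  -- integrability
  have hpathm : ∀ z : EuclideanSpace ℝ (Fin d), Measurable fun r : ℝ => lam (φ z r) :=
    fun z => hlam_meas.comp
      ((hφ_cont.comp (continuous_const.prodMk continuous_id)).measurable)
  have hint : ∀ (z : EuclideanSpace ℝ (Fin d)) (a b : ℝ),
      IntervalIntegrable (fun r => lam (φ z r)) volume a b := by
    intro z a b
    rw [intervalIntegrable_iff]
    refine Measure.integrableOn_of_bounded (M := Clam) measure_Ioc_lt_top.ne
      ((hpathm z).aestronglyMeasurable) (ae_of_all _ fun r => ?_)
    rw [Real.norm_eq_abs, abs_of_nonneg (hlam_nonneg _)]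
    exact hlam_bdd _
  have hLam_nonneg : ∀ (z : EuclideanSpace ℝ (Fin d)) (r : ℝ), 0 ≤ r → 0 ≤ Lam z r := by
    intro z r hr
    rw [hLam_def]
    exact intervalIntegral.integral_nonneg hr (fun w _ => hlam_nonneg _)
  have hLam_time : ∀ (z : EuclideanSpace ℝ (Fin d)) (r1 r2 : ℝ),
      |Lam z r1 - Lam z r2| ≤ Clam * |r1 - r2| := by
    intro z r1 r2
    rw [hLam_def, hLam_def,
      intervalIntegral.integral_interval_sub_left (hint z 0 r1) (hint z 0 r2)]
    have h := intervalIntegral.norm_integral_le_of_norm_le_const (C := Clam)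
      (f := fun r => lam (φ z r)) (a := r2) (b := r1) (fun w _ => by
        rw [Real.norm_eq_abs, abs_of_nonneg (hlam_nonneg _)]; exact hlam_bdd _)
    simpa [Real.norm_eq_abs] using h
  have hLam_space : |Lam x s - Lam y s| ≤ Llam * ‖x - y‖ * Ctstar := by
    rw [hLam_def, hLam_def, ← intervalIntegral.integral_sub (hint x 0 s) (hint y 0 s)]
    have h1 : ∀ w ∈ Set.uIoc (0:ℝ) s, ‖lam (φ x w) - lam (φ y w)‖ ≤ Llam * ‖x - y‖ := by
      intro w hw
      rw [Set.uIoc_of_le hs0] at hw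
      exact hlam_lip x hx y hy w hw.1.le
        (lt_min (lt_of_le_of_lt hw.2 hsx) (lt_of_le_of_lt hw.2 hsy))
    have h2 := intervalIntegral.norm_integral_le_of_norm_le_const h1
    rw [Real.norm_eq_abs] at h2
    refine h2.trans ?_
    have hsC : |s - 0| ≤ Ctstar := by
      rw [sub_zero, abs_of_nonneg hs0]; exact le_trans hsx.le hCts
    exact mul_le_mul_of_nonneg_left hsC hLl0
  have hsum : |t - s| + |s - u| = |t - u| := by
    rcases le_total t u with h | h
    · rw [hs, min_eq_left h, sub_self, abs_zero, zero_add]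
    · rw [hs, min_eq_right h, sub_self, abs_zero, add_zero]
  set a := α * t + Lam x t with ha
  set b := α * u + Lam y u with hb
  have ha0 : 0 ≤ a := add_nonneg (mul_nonneg hα_pos.le ht0) (hLam_nonneg x t ht0)
  have hb0 : 0 ≤ b := add_nonneg (mul_nonneg hα_pos.le hu0) (hLam_nonneg y u hu0)
  have hHx : H v x t = Real.exp (-a) * v (φ x t) := by
    rw [hH_def, min_eq_left htx.le]
    have : -(α * t) - Lam x t = -a := by rw [ha]; ring
    rw [this]
  have hHy : H v y u = Real.exp (-b) * v (φ y u) := by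
    rw [hH_def, min_eq_left huy.le]
    have : -(α * u) - Lam y u = -b := by rw [hb]; ring
    rw [this]
  -- Lipschitz estimate on v along the flow
  have hvt : |v (φ x t) - v (φ y u)| ≤ Lv1 * ‖x - y‖ + Lv2 * |t - u| := by
    have e1 : |v (φ x t) - v (φ x s)| ≤ Lv2 * |t - s| :=
      hv_L.lip2 x hx t ⟨ht0, htx.le⟩ s ⟨hs0, hsx.le⟩
    have e2 : |v (φ x s) - v (φ y s)| ≤ Lv1 * ‖x - y‖ :=
      hv_L.lip1 x hx y hy s ⟨hs0, le_min hsx.le hsy.le⟩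
    have e3 : |v (φ y s) - v (φ y u)| ≤ Lv2 * |s - u| :=
      hv_L.lip2 y hy s ⟨hs0, hsy.le⟩ u ⟨hu0, huy.le⟩
    have tri1 := abs_sub_le (v (φ x t)) (v (φ x s)) (v (φ y u))
    have tri2 := abs_sub_le (v (φ x s)) (v (φ y s)) (v (φ y u))
    have hmul : Lv2 * |t - s| + Lv2 * |s - u| = Lv2 * |t - u| := by
      rw [← hsum]; ring
    linarith
  -- estimate on the exponents
  have hab : |a - b| ≤ (Clam + α) * |t - u| + Llam * ‖x - y‖ * Ctstar := by
    have e0 : |α * t - α * u| = α * |t - u| := by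
      rw [← mul_sub, abs_mul, abs_of_nonneg hα_pos.le]
    have e1 := hLam_time x t s
    have e3 := hLam_time y s u
    have key : a - b = (α * t - α * u) + (Lam x t - Lam x s)
        + (Lam x s - Lam y s) + (Lam y s - Lam y u) := by rw [ha, hb]; ring
    have h4 := abs_add_le ((α * t - α * u) + (Lam x t - Lam x s) + (Lam x s - Lam y s))
      (Lam y s - Lam y u)
    have h5 := abs_add_le ((α * t - α * u) + (Lam x t - Lam x s)) (Lam x s - Lam y s)
    have h6 := abs_add_le (α * t - α * u) (Lam x t - Lam x s)
    have hmul : Clam * |t - s| + Clam * |s - u| = Clam * |t - u| := by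
      rw [← hsum]; ring
    rw [key]
    linarith [hLam_space]
  rw [hHx, hHy]
  have hexp_le : Real.exp (-a) ≤ 1 := Real.exp_le_one_iff.2 (by linarith)
  have hexp_lip := exp_neg_lip ha0 hb0
  have split : |Real.exp (-a) * v (φ x t) - Real.exp (-b) * v (φ y u)| ≤
      Real.exp (-a) * |v (φ x t) - v (φ y u)|
        + |Real.exp (-a) - Real.exp (-b)| * |v (φ y u)| := by
    have hid : Real.exp (-a) * v (φ x t) - Real.exp (-b) * v (φ y u)
        = Real.exp (-a) * (v (φ x t) - v (φ y u))
          + (Real.exp (-a) - Real.exp (-b)) * v (φ y u) := by ring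
    rw [hid]
    refine (abs_add_le _ _).trans ?_
    rw [abs_mul, abs_mul, abs_of_nonneg (Real.exp_pos _).le]
  have t1 : Real.exp (-a) * |v (φ x t) - v (φ y u)| ≤ Lv1 * ‖x - y‖ + Lv2 * |t - u| := by
    calc Real.exp (-a) * |v (φ x t) - v (φ y u)|
        ≤ 1 * (Lv1 * ‖x - y‖ + Lv2 * |t - u|) :=
          mul_le_mul hexp_le hvt (abs_nonneg _) zero_le_one
      _ = Lv1 * ‖x - y‖ + Lv2 * |t - u| := one_mul _
  have t2 : |Real.exp (-a) - Real.exp (-b)| * |v (φ y u)|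
      ≤ ((Clam + α) * |t - u| + Llam * ‖x - y‖ * Ctstar) * Cv :=
    mul_le_mul (hexp_lip.trans hab) hCv (abs_nonneg _)
      (le_trans (abs_nonneg (a - b)) hab)
  calc |Real.exp (-a) * v (φ x t) - Real.exp (-b) * v (φ y u)|
      ≤ Real.exp (-a) * |v (φ x t) - v (φ y u)|
        + |Real.exp (-a) - Real.exp (-b)| * |v (φ y u)| := split
    _ ≤ (Lv1 * ‖x - y‖ + Lv2 * |t - u|)
        + ((Clam + α) * |t - u| + Llam * ‖x - y‖ * Ctstar) * Cv := add_le_add t1 t2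
    _ = (Lv1 + Cv * Ctstar * Llam) * ‖x - y‖ + (Lv2 + Cv * (Clam + α)) * |t - u| := by ring
end

section
/- Let v,w ∈ L. For all x ∈ E, t ∈ [0, t*(x)) and u ≥ 0: J(v,w)(φ(x,t), u) = e^{αt + Λ(x,t)} [ J(v,w)(x, t+u) − F(x,t) − Iw(x,t) ]. -/
/-!
Everything follows from the flow property `φ(φ(x,t),s) = φ(x,s+t)`. Before its exit time the
trajectory of `x` stays in `E` (connectedness of `[0,s]`), so `t*(φ(x,t)) = t*(x) - t`, and
`Λ(φ(x,t),s) = Λ(x,s+t) - Λ(x,t)`. Hence the discount factor seen from `φ(x,t)` is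
`e^{αt+Λ(x,t)}` times the one seen from `x` at time `s + t`, and the substitution `s ↦ s + t` in
the integrals defining `F`, `Iw` and in `Hv` gives the identity.

The substitution needs the integrands to be integrable up to the exit time. Applying the Lipschitz
bound in the initial point to `x` and `φ(x,δ)` bounds the increment of `f` and `Qw` along the
trajectory over a time `δ` by `‖x - φ(x,δ)‖`, so both are continuous on the closed interval
`[0, t*(x)]`.
-/

open MeasureTheory Filter Set

open Function Topology intervalIntegral
open scoped Pointwise

noncomputable def exitTime {X : Type*} [TopologicalSpace X] (E : Set X) (φ : X → ℝ → X) (x : X) :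
    ℝ :=
  sInf {t : ℝ | 0 < t ∧ φ x t ∈ frontier E}

theorem flow_zero {X : Type*} {φ : X → ℝ → X} (hinj : Injective fun x => φ x 0)
    (hgroup : ∀ x s t, φ x (t + s) = φ (φ x s) t) (x : X) : φ x 0 = x :=
  hinj (by simpa using (hgroup x 0 0).symm)

section Flow

variable {X : Type*} [TopologicalSpace X] {E : Set X} {φ : X → ℝ → X} {x : X} {s : ℝ}

theorem exitTime_le {t : ℝ} (ht : 0 < t) (hfr : φ x t ∈ frontier E) : exitTime E φ x ≤ t :=
  csInf_le ⟨0, fun _ hr => hr.1.le⟩ ⟨ht, hfr⟩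

theorem flow_mem_of_lt_exitTime (hE : IsOpen E) (hx : x ∈ E) (hcont : Continuous (φ x))
    (h0 : φ x 0 = x) (hs : 0 ≤ s) (hsT : s < exitTime E φ x) : φ x s ∈ E := by
  have hfr : ∀ r ∈ Icc 0 s, φ x r ∉ frontier E := by
    rintro r ⟨hr0, hrs⟩ hr
    rcases hr0.eq_or_lt with rfl | hr0
    · rw [h0, hE.frontier_eq] at hr
      exact hr.2 hx
    · exact (exitTime_le hr0 hr).not_gt (hrs.trans_lt hsT)
  have hcover : Icc 0 s ⊆ φ x ⁻¹' E ∪ φ x ⁻¹' (closure E)ᶜ := by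
    intro r hr
    by_contra hout
    simp only [mem_union, mem_preimage, mem_compl_iff, not_or, not_not] at hout
    exact hfr r hr (hE.frontier_eq ▸ ⟨hout.2, hout.1⟩)
  have hdisj : Disjoint (φ x ⁻¹' E) (φ x ⁻¹' (closure E)ᶜ) :=
    (disjoint_compl_right.mono_right (compl_subset_compl.mpr subset_closure)).preimage _
  exact isPreconnected_Icc.subset_left_of_subset_union (hE.preimage hcont)
    (isClosed_closure.isOpen_compl.preimage hcont) hdisj hcover
    ⟨0, ⟨le_rfl, hs⟩, by simpa [h0] using hx⟩ ⟨hs, le_rfl⟩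

theorem exitTime_flow (hgroup : ∀ s t, φ x (t + s) = φ (φ x s) t) (hs : 0 ≤ s)
    (hsT : s < exitTime E φ x) : exitTime E φ (φ x s) = exitTime E φ x - s := by
  set S := {t : ℝ | 0 < t ∧ φ x t ∈ frontier E}
  have hT : exitTime E φ x = sInf S := rfl
  -- `sInf ∅ = 0`, so `0 ≤ s < exitTime` forces the trajectory to reach the boundary.
  have hS : S.Nonempty := by
    by_contra hS
    rw [not_nonempty_iff_eq_empty] at hS
    rw [hT, hS, Real.sInf_empty] at hsT
    linarith
  have hshift : {r : ℝ | 0 < r ∧ φ (φ x s) r ∈ frontier E} = S + {-s} := by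
    ext r
    simp only [add_singleton, mem_image, mem_ofPred_eq, ← hgroup, S]
    constructor
    · rintro ⟨hr, hfr⟩
      exact ⟨r + s, ⟨by linarith, hfr⟩, by ring⟩
    · rintro ⟨q, ⟨hq, hfr⟩, rfl⟩
      have := exitTime_le hq hfr
      exact ⟨by linarith, by simpa using hfr⟩
  rw [exitTime, hshift, csInf_add hS ⟨0, fun _ hr => hr.1.le⟩ (singleton_nonempty _)
    bddBelow_singleton, csInf_singleton, ← sub_eq_add_neg, hT]

theorem flow_mem_and_tstar_flow {tstar : X → ℝ} (hE : IsOpen E) (hx : x ∈ E)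
    (hcont : Continuous (φ x)) (h0 : φ x 0 = x) (hgroup : ∀ s t, φ x (t + s) = φ (φ x s) t)
    (htstar : ∀ y ∈ E, tstar y = exitTime E φ y) :
    ∀ δ ∈ Ico 0 (tstar x), φ x δ ∈ E ∧ tstar (φ x δ) = tstar x - δ := by
  rintro δ ⟨hδ, hδT⟩
  rw [htstar x hx] at hδT ⊢
  have hmem := flow_mem_of_lt_exitTime hE hx hcont h0 hδ hδT
  exact ⟨hmem, by rw [htstar _ hmem, exitTime_flow hgroup hδ hδT]⟩

end Flow

section Regularity

variable {X : Type*} [SeminormedAddCommGroup X] {E : Set X} {φ : X → ℝ → X} {tstar : X → ℝ}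
  {g : X → ℝ} {K : ℝ} {x : X}

theorem abs_sub_comp_flow_le (hgroup : ∀ s t, φ x (t + s) = φ (φ x s) t)
    (hflow : ∀ δ ∈ Ico 0 (tstar x), φ x δ ∈ E ∧ tstar (φ x δ) = tstar x - δ)
    (hg : ∀ y ∈ E, ∀ u ∈ Icc 0 (min (tstar x) (tstar y)), |g (φ x u) - g (φ y u)| ≤ K * ‖x - y‖)
    {a δ : ℝ} (ha : 0 ≤ a) (hδ : 0 ≤ δ) (hδT : δ < tstar x) (haδ : a + δ ≤ tstar x) :
    |g (φ x a) - g (φ x (a + δ))| ≤ K * ‖x - φ x δ‖ := by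
  obtain ⟨hδE, hδstar⟩ := hflow δ ⟨hδ, hδT⟩
  rw [hgroup]
  exact hg _ hδE a ⟨ha, by rw [hδstar]; exact le_min (by linarith) (by linarith)⟩

theorem continuousOn_comp_flow_Icc (hcont : Continuous (φ x)) (h0 : φ x 0 = x)
    (hgroup : ∀ s t, φ x (t + s) = φ (φ x s) t)
    (hflow : ∀ δ ∈ Ico 0 (tstar x), φ x δ ∈ E ∧ tstar (φ x δ) = tstar x - δ)
    (hg : ∀ y ∈ E, ∀ u ∈ Icc 0 (min (tstar x) (tstar y)), |g (φ x u) - g (φ y u)| ≤ K * ‖x - y‖) :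
    ContinuousOn (fun s => g (φ x s)) (Icc 0 (tstar x)) := by
  rcases le_or_gt (tstar x) 0 with hT | hT
  · exact (subsingleton_Icc_of_ge hT).continuousOn _
  intro s₀ hs₀
  rw [ContinuousWithinAt, tendsto_iff_dist_tendsto_zero]
  have hlim : Tendsto (fun s => K * ‖x - φ x |s - s₀|‖) (𝓝[Icc 0 (tstar x)] s₀) (𝓝 0) := by
    have hc : Continuous fun s => K * ‖x - φ x |s - s₀|‖ := by fun_prop
    simpa [h0] using (hc.tendsto s₀).mono_left nhdsWithin_le_nhds
  refine squeeze_zero' (Eventually.of_forall fun _ => dist_nonneg) ?_ hlim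
  filter_upwards [self_mem_nhdsWithin, nhdsWithin_le_nhds (Metric.ball_mem_nhds s₀ hT)]
    with s hs hball
  rw [Metric.mem_ball, Real.dist_eq] at hball
  rw [Real.dist_eq]
  rcases le_total s s₀ with h | h
  · rw [abs_of_nonpos (sub_nonpos.2 h), neg_sub] at hball ⊢
    simpa using
      abs_sub_comp_flow_le hgroup hflow hg hs.1 (sub_nonneg.2 h) hball (by simpa using hs₀.2)
  · rw [abs_of_nonneg (sub_nonneg.2 h)] at hball ⊢
    rw [abs_sub_comm]
    simpa using
      abs_sub_comp_flow_le hgroup hflow hg hs₀.1 (sub_nonneg.2 h) hball (by simpa using hs.2)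

end Regularity

theorem integral_comp_add_right_eq_sub {g : ℝ → ℝ} {t m : ℝ}
    (h₁ : IntervalIntegrable g volume 0 (m + t)) (h₂ : IntervalIntegrable g volume 0 t) :
    ∫ s in 0..m, g (s + t) = (∫ s in 0..m + t, g s) - ∫ s in 0..t, g s := by
  rw [integral_comp_add_right, zero_add, integral_interval_sub_left h₁ h₂]

section Discount

variable {X : Type*} {φ : X → ℝ → X} {Lam : X → ℝ → ℝ} {α t : ℝ} {x : X}

theorem intervalIntegrable_comp_flow [TopologicalSpace X] [MeasurableSpace X]
    [BorelSpace X] {lam : X → ℝ} {C : ℝ} (hmeas : Measurable lam)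
    (hnonneg : ∀ y, 0 ≤ lam y) (hbdd : ∀ y, lam y ≤ C) (hcont : Continuous (φ x)) (a b : ℝ) :
    IntervalIntegrable (fun s => lam (φ x s)) volume a b := by
  refine (intervalIntegrable_const (c := C)).mono_fun'
    (hmeas.comp hcont.measurable).aestronglyMeasurable (Eventually.of_forall fun s => ?_)
  simpa only [Real.norm_eq_abs, abs_of_nonneg (hnonneg _)] using hbdd _

theorem exp_discount_flow (hLam : ∀ s, Lam (φ x t) s = Lam x (s + t) - Lam x t) (s : ℝ) :
    Real.exp (-(α * s) - Lam (φ x t) s) =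
      Real.exp (α * t + Lam x t) * Real.exp (-(α * (s + t)) - Lam x (s + t)) := by
  rw [hLam, ← Real.exp_add]
  ring_nf

theorem integral_discount_flow (hgroup : ∀ s, φ x (s + t) = φ (φ x t) s)
    (hLam : ∀ s, Lam (φ x t) s = Lam x (s + t) - Lam x t) (hLam_cont : Continuous (Lam x))
    (h : X → ℝ) {m : ℝ} (ht : 0 ≤ t) (hm : 0 ≤ m)
    (hh : IntervalIntegrable (fun s => h (φ x s)) volume 0 (m + t)) :
    ∫ s in 0..m, Real.exp (-(α * s) - Lam (φ x t) s) * h (φ (φ x t) s) =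
      Real.exp (α * t + Lam x t) *
        ((∫ s in 0..m + t, Real.exp (-(α * s) - Lam x s) * h (φ x s)) -
          ∫ s in 0..t, Real.exp (-(α * s) - Lam x s) * h (φ x s)) := by
  have hint : IntervalIntegrable (fun s => Real.exp (-(α * s) - Lam x s) * h (φ x s))
      volume 0 (m + t) := hh.continuousOn_mul (by fun_prop)
  have hshift : (fun s => Real.exp (-(α * s) - Lam (φ x t) s) * h (φ (φ x t) s)) = fun s =>
      Real.exp (α * t + Lam x t) *
        (Real.exp (-(α * (s + t)) - Lam x (s + t)) * h (φ x (s + t))) := by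
    ext s
    rw [exp_discount_flow hLam, hgroup, mul_assoc]
  rw [hshift, intervalIntegral.integral_const_mul, integral_comp_add_right_eq_sub hint
    (hint.mono_set (uIcc_subset_uIcc_left (mem_uIcc_of_le ht (by linarith))))]

end Discount

theorem stmt_13_general
    {d : ℕ}
    (E : Set (EuclideanSpace ℝ (Fin d)))
    (hE_open : IsOpen E)
    (φ : EuclideanSpace ℝ (Fin d) → ℝ → EuclideanSpace ℝ (Fin d))
    (hφ_cont : Continuous fun p : EuclideanSpace ℝ (Fin d) × ℝ => φ p.1 p.2)
    (hφ_homeo : ∀ t : ℝ, ∃ h : EuclideanSpace ℝ (Fin d) ≃ₜ EuclideanSpace ℝ (Fin d), ∀ x, h x = φ x t)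
    (hφ_group : ∀ x s t, φ x (t + s) = φ (φ x s) t)
    (tstar : EuclideanSpace ℝ (Fin d) → ℝ)
    (htstar_def : ∀ x ∈ E, tstar x = sInf {t : ℝ | 0 < t ∧ φ x t ∈ frontier E})
    (lam : EuclideanSpace ℝ (Fin d) → ℝ)
    (hlam_meas : Measurable lam)
    (hlam_nonneg : ∀ x, 0 ≤ lam x)
    (Clam : ℝ) (hlam_bdd : ∀ x, lam x ≤ Clam)
    (Lam : EuclideanSpace ℝ (Fin d) → ℝ → ℝ)
    (hLam_def : ∀ x t, Lam x t = ∫ s in (0:ℝ)..t, lam (φ x s))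
    (α : ℝ)
    (f : EuclideanSpace ℝ (Fin d) → ℝ) (Cf Lf1 Lf2 Lfs : ℝ)
    (hf_L : IsInL E φ tstar f Cf Lf1 Lf2 Lfs)
    (F : EuclideanSpace ℝ (Fin d) → ℝ → ℝ)
    (hF_def : ∀ x t, F x t =
      ∫ s in (0:ℝ)..(min t (tstar x)), Real.exp (-(α * s) - Lam x s) * f (φ x s))
    (Qop : (EuclideanSpace ℝ (Fin d) → ℝ) → EuclideanSpace ℝ (Fin d) → ℝ)
    (LQ : ℝ)
    (hQ_lip1 : ∀ (g : EuclideanSpace ℝ (Fin d) → ℝ) (Cg Lg1 Lg2 Lgs : ℝ),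
      IsInL E φ tstar g Cg Lg1 Lg2 Lgs →
      ∀ x ∈ E, ∀ y ∈ E, ∀ u ∈ Set.Icc (0:ℝ) (min (tstar x) (tstar y)),
        |Qop g (φ x u) - Qop g (φ y u)| ≤ LQ * Lg1 * ‖x - y‖)
    (v : EuclideanSpace ℝ (Fin d) → ℝ)
    (w : EuclideanSpace ℝ (Fin d) → ℝ) (Cw Lw1 Lw2 Lws : ℝ)
    (hw_L : IsInL E φ tstar w Cw Lw1 Lw2 Lws)
    (H : (EuclideanSpace ℝ (Fin d) → ℝ) → EuclideanSpace ℝ (Fin d) → ℝ → ℝ)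
    (hH_def : ∀ (g : EuclideanSpace ℝ (Fin d) → ℝ) (x : EuclideanSpace ℝ (Fin d)) (t : ℝ), H g x t =
      Real.exp (-(α * min t (tstar x)) - Lam x (min t (tstar x))) * g (φ x (min t (tstar x))))
    (Iop : (EuclideanSpace ℝ (Fin d) → ℝ) → EuclideanSpace ℝ (Fin d) → ℝ → ℝ)
    (hIop_def : ∀ (g : EuclideanSpace ℝ (Fin d) → ℝ) (x : EuclideanSpace ℝ (Fin d)) (t : ℝ), Iop g x t =
      ∫ s in (0:ℝ)..(min t (tstar x)),
        Real.exp (-(α * s) - Lam x s) * lam (φ x s) * Qop g (φ x s))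
    (J : (EuclideanSpace ℝ (Fin d) → ℝ) → (EuclideanSpace ℝ (Fin d) → ℝ) → EuclideanSpace ℝ (Fin d) → ℝ → ℝ)
    (hJ_def : ∀ (g₁ g₂ : EuclideanSpace ℝ (Fin d) → ℝ) (x : EuclideanSpace ℝ (Fin d)) (t : ℝ),
      J g₁ g₂ x t = F x t + H g₁ x t + Iop g₂ x t)
    :
    ∀ x ∈ E, ∀ t : ℝ, 0 ≤ t → t < tstar x → ∀ u : ℝ, 0 ≤ u →
      J v w (φ x t) u =
        Real.exp (α * t + Lam x t) * (J v w x (t + u) - F x t - Iop w x t) := by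
  intro x hx t ht htT u hu
  have hφ0 := flow_zero (by obtain ⟨h, hh⟩ := hφ_homeo 0; exact funext hh ▸ h.injective) hφ_group
  have hcont : Continuous (φ x) := hφ_cont.comp (Continuous.prodMk_right x)
  have hflow := flow_mem_and_tstar_flow hE_open hx hcont (hφ0 x) (hφ_group x) htstar_def
  have hlam := intervalIntegrable_comp_flow hlam_meas hlam_nonneg hlam_bdd hcont
  have hLam_cont : Continuous (Lam x) := funext (hLam_def x) ▸ continuous_primitive hlam 0
  have hLam : ∀ s, Lam (φ x t) s = Lam x (s + t) - Lam x t := fun s => by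
    simp only [hLam_def, ← hφ_group]
    exact integral_comp_add_right_eq_sub (hlam _ _) (hlam _ _)
  have hsub : uIcc 0 (min u (tstar x - t) + t) ⊆ Icc 0 (tstar x) := by
    rw [uIcc_of_le (by positivity)]
    exact Icc_subset_Icc le_rfl (by linarith [min_le_right u (tstar x - t)])
  have hf :=
    (continuousOn_comp_flow_Icc hcont (hφ0 x) (hφ_group x) hflow (hf_L.lip1 x hx)).mono hsub
  have hQw := (continuousOn_comp_flow_Icc hcont (hφ0 x) (hφ_group x) hflow
    (hQ_lip1 w Cw Lw1 Lw2 Lws hw_L x hx)).mono hsub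
  have hmin : min (t + u) (tstar x) = min u (tstar x - t) + t := by
    rw [← min_add_add_right, sub_add_cancel, add_comm]
  simp only [hJ_def, hF_def, hH_def, hIop_def, (hflow t ⟨ht, htT⟩).2, hmin, min_eq_left htT.le,
    mul_assoc]
  have hm : 0 ≤ min u (tstar x - t) := le_min hu (by linarith)
  rw [integral_discount_flow (hφ_group x t) hLam hLam_cont f ht hm hf.intervalIntegrable,
    integral_discount_flow (hφ_group x t) hLam hLam_cont (fun z => lam z * Qop w z) ht hm
      ((hlam 0 _).mul_continuousOn hQw),
    exp_discount_flow hLam, ← hφ_group]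
  ring

theorem stmt_13
    {d : ℕ}
    (E : Set (EuclideanSpace ℝ (Fin d)))
    (hE_open : IsOpen E)
    (φ : EuclideanSpace ℝ (Fin d) → ℝ → EuclideanSpace ℝ (Fin d))
    (hφ_cont : Continuous fun p : EuclideanSpace ℝ (Fin d) × ℝ => φ p.1 p.2)
    (hφ_homeo : ∀ t : ℝ, ∃ h : EuclideanSpace ℝ (Fin d) ≃ₜ EuclideanSpace ℝ (Fin d), ∀ x, h x = φ x t)
    (hφ_group : ∀ x s t, φ x (t + s) = φ (φ x s) t)
    (tstar : EuclideanSpace ℝ (Fin d) → ℝ)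
    (htstar_def : ∀ x ∈ E, tstar x = sInf {t : ℝ | 0 < t ∧ φ x t ∈ frontier E})
    (Ctstar : ℝ) (htstar_bdd : ∀ x ∈ E, tstar x ≤ Ctstar)
    (Ltstar : ℝ) (htstar_lip : ∀ x ∈ E, ∀ y ∈ E, |tstar x - tstar y| ≤ Ltstar * ‖x - y‖)
    (lam : EuclideanSpace ℝ (Fin d) → ℝ)
    (hlam_meas : Measurable lam)
    (hlam_nonneg : ∀ x, 0 ≤ lam x)
    (Clam : ℝ) (hlam_bdd : ∀ x, lam x ≤ Clam)
    (Llam : ℝ)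
    (hlam_lip : ∀ x ∈ E, ∀ y ∈ E, ∀ u : ℝ, 0 ≤ u → u < min (tstar x) (tstar y) →
      |lam (φ x u) - lam (φ y u)| ≤ Llam * ‖x - y‖)
    (Lam : EuclideanSpace ℝ (Fin d) → ℝ → ℝ)
    (hLam_def : ∀ x t, Lam x t = ∫ s in (0:ℝ)..t, lam (φ x s))
    (α : ℝ) (hα_pos : 0 < α)
    (f : EuclideanSpace ℝ (Fin d) → ℝ) (Cf Lf1 Lf2 Lfs : ℝ)
    (hf_L : IsInL E φ tstar f Cf Lf1 Lf2 Lfs)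
    (hf_pos : ∀ x ∈ E, 0 < f x)
    (F : EuclideanSpace ℝ (Fin d) → ℝ → ℝ)
    (hF_def : ∀ x t, F x t =
      ∫ s in (0:ℝ)..(min t (tstar x)), Real.exp (-(α * s) - Lam x s) * f (φ x s))
    (Q : ProbabilityTheory.Kernel (EuclideanSpace ℝ (Fin d)) (EuclideanSpace ℝ (Fin d)))
    (hQ_markov : ProbabilityTheory.IsMarkovKernel Q)
    (hQ_supp : ∀ x, Q x (E \ {x}) = 1)
    (Qop : (EuclideanSpace ℝ (Fin d) → ℝ) → EuclideanSpace ℝ (Fin d) → ℝ)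
    (hQop_def : ∀ (g : EuclideanSpace ℝ (Fin d) → ℝ) (x : EuclideanSpace ℝ (Fin d)), Qop g x = ∫ z, g z ∂(Q x))
    (LQ : ℝ)
    (hQ_lip1 : ∀ (g : EuclideanSpace ℝ (Fin d) → ℝ) (Cg Lg1 Lg2 Lgs : ℝ),
      IsInL E φ tstar g Cg Lg1 Lg2 Lgs →
      ∀ x ∈ E, ∀ y ∈ E, ∀ u ∈ Set.Icc (0:ℝ) (min (tstar x) (tstar y)),
        |Qop g (φ x u) - Qop g (φ y u)| ≤ LQ * Lg1 * ‖x - y‖)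
    (hQ_lipstar : ∀ (g : EuclideanSpace ℝ (Fin d) → ℝ) (Cg Lg1 Lg2 Lgs : ℝ),
      IsInL E φ tstar g Cg Lg1 Lg2 Lgs →
      ∀ x ∈ E, ∀ y ∈ E,
        |Qop g (φ x (tstar x)) - Qop g (φ y (tstar y))| ≤ LQ * Lgs * ‖x - y‖)
    (v : EuclideanSpace ℝ (Fin d) → ℝ) (Cv Lv1 Lv2 Lvs : ℝ)
    (hv_L : IsInL E φ tstar v Cv Lv1 Lv2 Lvs)
    (w : EuclideanSpace ℝ (Fin d) → ℝ) (Cw Lw1 Lw2 Lws : ℝ)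
    (hw_L : IsInL E φ tstar w Cw Lw1 Lw2 Lws)
    (H : (EuclideanSpace ℝ (Fin d) → ℝ) → EuclideanSpace ℝ (Fin d) → ℝ → ℝ)
    (hH_def : ∀ (g : EuclideanSpace ℝ (Fin d) → ℝ) (x : EuclideanSpace ℝ (Fin d)) (t : ℝ), H g x t =
      Real.exp (-(α * min t (tstar x)) - Lam x (min t (tstar x))) * g (φ x (min t (tstar x))))
    (Iop : (EuclideanSpace ℝ (Fin d) → ℝ) → EuclideanSpace ℝ (Fin d) → ℝ → ℝ)
    (hIop_def : ∀ (g : EuclideanSpace ℝ (Fin d) → ℝ) (x : EuclideanSpace ℝ (Fin d)) (t : ℝ), Iop g x t =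
      ∫ s in (0:ℝ)..(min t (tstar x)),
        Real.exp (-(α * s) - Lam x s) * lam (φ x s) * Qop g (φ x s))
    (J : (EuclideanSpace ℝ (Fin d) → ℝ) → (EuclideanSpace ℝ (Fin d) → ℝ) → EuclideanSpace ℝ (Fin d) → ℝ → ℝ)
    (hJ_def : ∀ (g₁ g₂ : EuclideanSpace ℝ (Fin d) → ℝ) (x : EuclideanSpace ℝ (Fin d)) (t : ℝ),
      J g₁ g₂ x t = F x t + H g₁ x t + Iop g₂ x t)
    :
    ∀ x ∈ E, ∀ t : ℝ, 0 ≤ t → t < tstar x → ∀ u : ℝ, 0 ≤ u →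
      J v w (φ x t) u =
        Real.exp (α * t + Lam x t) * (J v w x (t + u) - F x t - Iop w x t) :=
  stmt_13_general E hE_open φ hφ_cont hφ_homeo hφ_group tstar htstar_def lam hlam_meas hlam_nonneg
    Clam hlam_bdd Lam hLam_def α f Cf Lf1 Lf2 Lfs hf_L F hF_def Qop LQ hQ_lip1 v w Cw Lw1 Lw2 Lws
    hw_L H hH_def Iop hIop_def J hJ_def
end

section
/- Let w ∈ L. For all x ∈ E and t ∈ [0, t*(x)): Kw(φ(x,t)) = e^{αt + Λ(x,t)} [ Kw(x) − F(x,t) − Iw(x,t) ]. -/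
open MeasureTheory Filter Set

theorem stmt_14
    {d : ℕ}
    (E : Set (EuclideanSpace ℝ (Fin d)))
    (hE_open : IsOpen E)
    (φ : EuclideanSpace ℝ (Fin d) → ℝ → EuclideanSpace ℝ (Fin d))
    (hφ_cont : Continuous fun p : EuclideanSpace ℝ (Fin d) × ℝ => φ p.1 p.2)
    (hφ_homeo : ∀ t : ℝ, ∃ h : EuclideanSpace ℝ (Fin d) ≃ₜ EuclideanSpace ℝ (Fin d), ∀ x, h x = φ x t)
    (hφ_group : ∀ x s t, φ x (t + s) = φ (φ x s) t)
    (tstar : EuclideanSpace ℝ (Fin d) → ℝ)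
    (htstar_def : ∀ x ∈ E, tstar x = sInf {t : ℝ | 0 < t ∧ φ x t ∈ frontier E})
    (Ctstar : ℝ) (htstar_bdd : ∀ x ∈ E, tstar x ≤ Ctstar)
    (Ltstar : ℝ) (htstar_lip : ∀ x ∈ E, ∀ y ∈ E, |tstar x - tstar y| ≤ Ltstar * ‖x - y‖)
    (lam : EuclideanSpace ℝ (Fin d) → ℝ)
    (hlam_meas : Measurable lam)
    (hlam_nonneg : ∀ x, 0 ≤ lam x)
    (Clam : ℝ) (hlam_bdd : ∀ x, lam x ≤ Clam)
    (Llam : ℝ)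
    (hlam_lip : ∀ x ∈ E, ∀ y ∈ E, ∀ u : ℝ, 0 ≤ u → u < min (tstar x) (tstar y) →
      |lam (φ x u) - lam (φ y u)| ≤ Llam * ‖x - y‖)
    (Lam : EuclideanSpace ℝ (Fin d) → ℝ → ℝ)
    (hLam_def : ∀ x t, Lam x t = ∫ s in (0:ℝ)..t, lam (φ x s))
    (α : ℝ) (hα_pos : 0 < α)
    (f : EuclideanSpace ℝ (Fin d) → ℝ) (Cf Lf1 Lf2 Lfs : ℝ)
    (hf_L : IsInL E φ tstar f Cf Lf1 Lf2 Lfs)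
    (hf_pos : ∀ x ∈ E, 0 < f x)
    (F : EuclideanSpace ℝ (Fin d) → ℝ → ℝ)
    (hF_def : ∀ x t, F x t =
      ∫ s in (0:ℝ)..(min t (tstar x)), Real.exp (-(α * s) - Lam x s) * f (φ x s))
    (Q : ProbabilityTheory.Kernel (EuclideanSpace ℝ (Fin d)) (EuclideanSpace ℝ (Fin d)))
    (hQ_markov : ProbabilityTheory.IsMarkovKernel Q)
    (hQ_supp : ∀ x, Q x (E \ {x}) = 1)
    (Qop : (EuclideanSpace ℝ (Fin d) → ℝ) → EuclideanSpace ℝ (Fin d) → ℝ)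
    (hQop_def : ∀ (g : EuclideanSpace ℝ (Fin d) → ℝ) (x : EuclideanSpace ℝ (Fin d)), Qop g x = ∫ z, g z ∂(Q x))
    (LQ : ℝ)
    (hQ_lip1 : ∀ (g : EuclideanSpace ℝ (Fin d) → ℝ) (Cg Lg1 Lg2 Lgs : ℝ),
      IsInL E φ tstar g Cg Lg1 Lg2 Lgs →
      ∀ x ∈ E, ∀ y ∈ E, ∀ u ∈ Set.Icc (0:ℝ) (min (tstar x) (tstar y)),
        |Qop g (φ x u) - Qop g (φ y u)| ≤ LQ * Lg1 * ‖x - y‖)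
    (hQ_lipstar : ∀ (g : EuclideanSpace ℝ (Fin d) → ℝ) (Cg Lg1 Lg2 Lgs : ℝ),
      IsInL E φ tstar g Cg Lg1 Lg2 Lgs →
      ∀ x ∈ E, ∀ y ∈ E,
        |Qop g (φ x (tstar x)) - Qop g (φ y (tstar y))| ≤ LQ * Lgs * ‖x - y‖)
    (w : EuclideanSpace ℝ (Fin d) → ℝ) (Cw Lw1 Lw2 Lws : ℝ)
    (hw_L : IsInL E φ tstar w Cw Lw1 Lw2 Lws)
    (H : (EuclideanSpace ℝ (Fin d) → ℝ) → EuclideanSpace ℝ (Fin d) → ℝ → ℝ)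
    (hH_def : ∀ (g : EuclideanSpace ℝ (Fin d) → ℝ) (x : EuclideanSpace ℝ (Fin d)) (t : ℝ), H g x t =
      Real.exp (-(α * min t (tstar x)) - Lam x (min t (tstar x))) * g (φ x (min t (tstar x))))
    (Iop : (EuclideanSpace ℝ (Fin d) → ℝ) → EuclideanSpace ℝ (Fin d) → ℝ → ℝ)
    (hIop_def : ∀ (g : EuclideanSpace ℝ (Fin d) → ℝ) (x : EuclideanSpace ℝ (Fin d)) (t : ℝ), Iop g x t =
      ∫ s in (0:ℝ)..(min t (tstar x)),
        Real.exp (-(α * s) - Lam x s) * lam (φ x s) * Qop g (φ x s))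
    (K : (EuclideanSpace ℝ (Fin d) → ℝ) → EuclideanSpace ℝ (Fin d) → ℝ)
    (hK_def : ∀ (g : EuclideanSpace ℝ (Fin d) → ℝ) (x : EuclideanSpace ℝ (Fin d)),
      K g x = F x (tstar x) + H (Qop g) x (tstar x) + Iop g x (tstar x))
    :
    ∀ x ∈ E, ∀ t : ℝ, 0 ≤ t → t < tstar x →
      K w (φ x t) = Real.exp (α * t + Lam x t) * (K w x - F x t - Iop w x t) := by
  intro x hx t ht htT
  haveI := hQ_markov
  -- basic flow facts
  have hcontflow : ∀ y, Continuous fun s : ℝ => φ y s := fun y =>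
    hφ_cont.comp (continuous_const.prodMk continuous_id)
  have hφx0 : ∀ y, φ y 0 = y := by
    intro y
    obtain ⟨h, hh⟩ := hφ_homeo 0
    have e1 : φ (φ y 0) 0 = φ y 0 := by simpa using (hφ_group y 0 0).symm
    have e2 : h (φ y 0) = h y := by rw [hh, hh, e1]
    exact h.injective e2
  have htstar_nonneg : ∀ y ∈ E, 0 ≤ tstar y := by
    intro y hy
    rw [htstar_def y hy]
    exact Real.sInf_nonneg fun z hz => hz.1.le
  -- the flow stays in E before the exit time
  have hstay : ∀ y ∈ E, ∀ u : ℝ, 0 ≤ u → u < tstar y → φ y u ∈ E := by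
    intro y hy u hu hut
    by_contra hnot
    set S : Set ℝ := Set.Icc 0 u ∩ (fun v => φ y v) ⁻¹' Eᶜ with hS
    have hSclosed : IsClosed S :=
      isClosed_Icc.inter (hE_open.isClosed_compl.preimage (hcontflow y))
    have hSne : S.Nonempty := ⟨u, ⟨hu, le_refl u⟩, hnot⟩
    have hSbdd : BddBelow S := ⟨0, fun v hv => hv.1.1⟩
    have hv₀S : sInf S ∈ S := hSclosed.csInf_mem hSne hSbdd
    set v₀ := sInf S
    have hv₀pos : 0 < v₀ := by
      rcases hv₀S.1.1.lt_or_eq with h | h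
      · exact h
      · exfalso
        apply hv₀S.2
        show φ y v₀ ∈ E
        rw [← h, hφx0]
        exact hy
    have hclos : φ y v₀ ∈ closure E := by
      apply mem_closure_of_tendsto
        (((hcontflow y).tendsto v₀).mono_left (nhdsWithin_le_nhds (s := Set.Iio v₀)))
      filter_upwards [Ioo_mem_nhdsLT_of_mem (Set.mem_Ioc.2 ⟨hv₀pos, le_refl v₀⟩)] with v hv
      by_contra hvE
      have hvS : v ∈ S := ⟨⟨hv.1.le, hv.2.le.trans hv₀S.1.2⟩, hvE⟩
      exact absurd (csInf_le hSbdd hvS) (not_le.2 hv.2)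
    have hfront : φ y v₀ ∈ frontier E := by
      rw [hE_open.frontier_eq]
      exact ⟨hclos, hv₀S.2⟩
    have hle : tstar y ≤ v₀ := by
      rw [htstar_def y hy]
      exact csInf_le ⟨0, fun z hz => hz.1.le⟩ ⟨hv₀pos, hfront⟩
    exact absurd (hle.trans hv₀S.1.2) (not_le.2 hut)
  have hxt_mem : φ x t ∈ E := hstay x hx t ht htT
  set T := tstar x with hT
  have hT0 : 0 ≤ T := htstar_nonneg x hx
  -- exit time shift
  have htshift : tstar (φ x t) = T - t := by
    have h1 := htstar_def x hx
    rw [← hT] at h1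
    have h2 := htstar_def (φ x t) hxt_mem
    set Sx := {s : ℝ | 0 < s ∧ φ x s ∈ frontier E} with hSx
    have hbdd : BddBelow Sx := ⟨0, fun z hz => hz.1.le⟩
    have hSxne : Sx.Nonempty := by
      by_contra h
      rw [Set.not_nonempty_iff_eq_empty] at h
      rw [h, Real.sInf_empty] at h1
      linarith
    have hmemge : ∀ s ∈ Sx, T ≤ s := fun s hs =>
      le_trans (le_of_eq h1) (csInf_le hbdd hs)
    have hS' : {s : ℝ | 0 < s ∧ φ (φ x t) s ∈ frontier E} = (fun u => u - t) '' Sx := by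
      ext s
      constructor
      · rintro ⟨hs, hf⟩
        exact ⟨s + t, ⟨by linarith, by rwa [hφ_group x t s]⟩, by ring⟩
      · rintro ⟨u, ⟨hu, hf⟩, rfl⟩
        have hTu : T ≤ u := hmemge u ⟨hu, hf⟩
        refine ⟨show (0:ℝ) < u - t by linarith, ?_⟩
        show φ (φ x t) (u - t) ∈ frontier E
        have h7 : u - t + t = u := by ring
        rw [← hφ_group x t (u - t), h7]
        exact hf
    have himbdd : BddBelow ((fun u => u - t) '' Sx) := by
      refine ⟨sInf Sx - t, ?_⟩
      rintro _ ⟨u, hu, rfl⟩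
      exact sub_le_sub_right (csInf_le hbdd hu) t
    rw [h2, hS', h1]
    apply le_antisymm
    · have h4 : ∀ u ∈ Sx, sInf ((fun u => u - t) '' Sx) ≤ u - t :=
        fun u hu => csInf_le himbdd ⟨u, hu, rfl⟩
      have h5 : sInf ((fun u => u - t) '' Sx) + t ≤ sInf Sx :=
        le_csInf hSxne fun u hu => by linarith [h4 u hu]
      linarith
    · apply le_csInf (hSxne.image _)
      rintro _ ⟨u, hu, rfl⟩
      exact sub_le_sub_right (csInf_le hbdd hu) t
  -- lambda along the flow
  have hmeas_lam : ∀ y, Measurable fun s : ℝ => lam (φ y s) := fun y =>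
    hlam_meas.comp (hcontflow y).measurable
  have hII_lam : ∀ y (a b : ℝ), IntervalIntegrable (fun s => lam (φ y s)) volume a b := by
    intro y a b
    rw [intervalIntegrable_iff]
    haveI : IsFiniteMeasure (volume.restrict (Set.uIoc a b)) := by
      refine ⟨?_⟩
      rw [Measure.restrict_apply_univ, Set.uIoc]
      exact measure_Ioc_lt_top
    apply Integrable.mono' (integrable_const Clam)
      ((hmeas_lam y).aestronglyMeasurable.restrict)
    filter_upwards with s
    rw [Real.norm_eq_abs, abs_of_nonneg (hlam_nonneg _)]
    exact hlam_bdd _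
  have hLam_cont : ∀ y, Continuous fun s : ℝ => Lam y s := by
    intro y
    have := intervalIntegral.continuous_primitive (hII_lam y) 0
    simp only [hLam_def]
    exact this
  have hLam_nonneg : ∀ y (s : ℝ), 0 ≤ s → 0 ≤ Lam y s := by
    intro y s hs
    rw [hLam_def]
    exact intervalIntegral.integral_nonneg hs fun u _ => hlam_nonneg _
  have hLam_shift : ∀ s : ℝ, Lam (φ x t) s = Lam x (s + t) - Lam x t := by
    intro s
    rw [hLam_def, hLam_def, hLam_def]
    have h1 : (fun u => lam (φ (φ x t) u)) = fun u => lam (φ x (u + t)) := by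
      funext u
      rw [← hφ_group x t u]
    rw [h1]
    have h2 := intervalIntegral.integral_comp_add_right (a := (0:ℝ)) (b := s)
      (fun u => lam (φ x u)) t
    simp only [zero_add] at h2
    rw [h2, ← intervalIntegral.integral_interval_sub_left (hII_lam x 0 (s + t)) (hII_lam x 0 t)]
  -- exponential bound
  have hexp_cont : Continuous fun s : ℝ => Real.exp (-(α * s) - Lam x s) :=
    Real.continuous_exp.comp (((continuous_const.mul continuous_id).neg).sub (hLam_cont x))
  have hexp_le : ∀ s : ℝ, 0 ≤ s → Real.exp (-(α * s) - Lam x s) ≤ 1 := by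
    intro s hs
    rw [Real.exp_le_one_iff]
    have h1 := hLam_nonneg x s hs
    nlinarith [hα_pos]
  -- Qop w facts
  have hQw_bdd : ∀ y, |Qop w y| ≤ Cw := by
    intro y
    rw [hQop_def]
    have h1 : Q y ((E \ {y})ᶜ) = 0 := by
      rw [measure_compl (hE_open.measurableSet.diff (measurableSet_singleton y))
        (measure_ne_top _ _), hQ_supp y, measure_univ]
      simp
    have h3 : ∀ᵐ z ∂(Q y), ‖w z‖ ≤ Cw := by
      have h4 : ∀ᵐ z ∂(Q y), z ∈ E \ {y} := by
        rw [MeasureTheory.ae_iff]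
        exact h1
      filter_upwards [h4] with z hz
      rw [Real.norm_eq_abs]
      exact hw_L.bdd z hz.1
    have h5 := MeasureTheory.norm_integral_le_of_norm_le_const (μ := Q y) h3
    rw [Real.norm_eq_abs] at h5
    simpa using h5
  have hCw0 : 0 ≤ Cw := le_trans (abs_nonneg _) (hQw_bdd x)
  have hCf0 : 0 ≤ Cf := le_trans (abs_nonneg _) (hf_L.bdd x hx)
  have hClam0 : 0 ≤ Clam := le_trans (hlam_nonneg 0) (hlam_bdd 0)
  have hQw_lipOn : LipschitzOnWith (Real.toNNReal (LQ * Lw1)) (Qop w) E := by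
    rw [lipschitzOnWith_iff_dist_le_mul]
    intro y hy z hz
    have h0 : (0:ℝ) ∈ Set.Icc (0:ℝ) (min (tstar y) (tstar z)) :=
      ⟨le_refl 0, le_min (htstar_nonneg y hy) (htstar_nonneg z hz)⟩
    have h1 := hQ_lip1 w Cw Lw1 Lw2 Lws hw_L y hy z hz 0 h0
    rw [hφx0, hφx0] at h1
    calc dist (Qop w y) (Qop w z) = |Qop w y - Qop w z| := Real.dist_eq _ _
      _ ≤ LQ * Lw1 * ‖y - z‖ := h1
      _ ≤ (Real.toNNReal (LQ * Lw1) : ℝ) * dist y z := by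
          rw [dist_eq_norm]
          exact mul_le_mul_of_nonneg_right (Real.le_coe_toNNReal _) (norm_nonneg _)
  obtain ⟨Qe, hQe_lip, hQe_eq⟩ := hQw_lipOn.extend_real
  -- interval integrability of the two integrands
  have hGf_II : ∀ a b : ℝ, 0 ≤ a → a ≤ b → b ≤ T →
      IntervalIntegrable (fun s => Real.exp (-(α * s) - Lam x s) * f (φ x s)) volume a b := by
    intro a b ha hab hbT
    rw [intervalIntegrable_iff_integrableOn_Ioc_of_le hab,
      integrableOn_Ioc_iff_integrableOn_Ioo]
    apply Integrable.mono' (integrable_const Cf)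
    · apply ContinuousOn.aestronglyMeasurable _ measurableSet_Ioo
      apply ContinuousOn.mul hexp_cont.continuousOn
      apply (hf_L.cont x hx).mono
      intro s hs
      exact ⟨(ha.trans hs.1.le), lt_of_lt_of_le hs.2 hbT⟩
    · rw [MeasureTheory.ae_restrict_iff' measurableSet_Ioo]
      filter_upwards with s hs
      have hs0 : 0 ≤ s := ha.trans hs.1.le
      have hsT : s < T := hs.2.trans_le hbT
      have hb1 : |f (φ x s)| ≤ Cf := hf_L.bdd _ (hstay x hx s hs0 hsT)
      rw [Real.norm_eq_abs, abs_mul, abs_of_pos (Real.exp_pos _)]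
      calc Real.exp (-(α * s) - Lam x s) * |f (φ x s)| ≤ 1 * Cf :=
            mul_le_mul (hexp_le s hs0) hb1 (abs_nonneg _) zero_le_one
        _ = Cf := one_mul _
  have hGi_II : ∀ a b : ℝ, 0 ≤ a → a ≤ b → b ≤ T →
      IntervalIntegrable (fun s => Real.exp (-(α * s) - Lam x s) * lam (φ x s) * Qop w (φ x s))
        volume a b := by
    intro a b ha hab hbT
    rw [intervalIntegrable_iff_integrableOn_Ioc_of_le hab,
      integrableOn_Ioc_iff_integrableOn_Ioo]
    apply Integrable.mono' (integrable_const (Clam * Cw))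
    · have hme : AEStronglyMeasurable
          (fun s => Real.exp (-(α * s) - Lam x s) * lam (φ x s) * Qe (φ x s))
          (volume.restrict (Set.Ioo a b)) :=
        (((hexp_cont.measurable.mul (hmeas_lam x)).mul
          ((hQe_lip.continuous.comp (hcontflow x)).measurable)).aestronglyMeasurable).restrict
      apply hme.congr
      filter_upwards [MeasureTheory.ae_restrict_mem measurableSet_Ioo] with s hs
      have hs0 : 0 ≤ s := ha.trans hs.1.le
      have hsT : s < T := hs.2.trans_le hbT
      rw [hQe_eq (hstay x hx s hs0 hsT)]
    · rw [MeasureTheory.ae_restrict_iff' measurableSet_Ioo]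
      filter_upwards with s hs
      have hs0 : 0 ≤ s := ha.trans hs.1.le
      have hsT : s < T := hs.2.trans_le hbT
      rw [Real.norm_eq_abs, abs_mul, abs_mul, abs_of_pos (Real.exp_pos _),
        abs_of_nonneg (hlam_nonneg _)]
      calc Real.exp (-(α * s) - Lam x s) * lam (φ x s) * |Qop w (φ x s)|
          ≤ 1 * Clam * Cw := by
            apply mul_le_mul _ (hQw_bdd _) (abs_nonneg _) (by positivity)
            exact mul_le_mul (hexp_le s hs0) (hlam_bdd _) (hlam_nonneg _) zero_le_one
        _ = Clam * Cw := by ring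
  -- the four basic integral representations
  have hFx_T : F x T = ∫ s in (0:ℝ)..T, Real.exp (-(α * s) - Lam x s) * f (φ x s) := by
    rw [hF_def, ← hT, min_self]
  have hFx_t : F x t = ∫ s in (0:ℝ)..t, Real.exp (-(α * s) - Lam x s) * f (φ x s) := by
    rw [hF_def, ← hT, min_eq_left htT.le]
  have hIx_T : Iop w x T = ∫ s in (0:ℝ)..T,
      Real.exp (-(α * s) - Lam x s) * lam (φ x s) * Qop w (φ x s) := by
    rw [hIop_def, ← hT, min_self]
  have hIx_t : Iop w x t = ∫ s in (0:ℝ)..t,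
      Real.exp (-(α * s) - Lam x s) * lam (φ x s) * Qop w (φ x s) := by
    rw [hIop_def, ← hT, min_eq_left htT.le]
  -- key transformation for F
  have key1 : F (φ x t) (T - t) = Real.exp (α * t + Lam x t) * (F x T - F x t) := by
    rw [hF_def (φ x t) (T - t), htshift, min_self]
    calc (∫ s in (0:ℝ)..(T - t), Real.exp (-(α * s) - Lam (φ x t) s) * f (φ (φ x t) s))
        = ∫ s in (0:ℝ)..(T - t), Real.exp (α * t + Lam x t) *
            (Real.exp (-(α * (s + t)) - Lam x (s + t)) * f (φ x (s + t))) := by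
          apply intervalIntegral.integral_congr
          intro s _
          beta_reduce
          rw [← hφ_group x t s, hLam_shift s, ← mul_assoc, ← Real.exp_add]
          congr 2
          ring
      _ = Real.exp (α * t + Lam x t) * ∫ s in (0:ℝ)..(T - t),
            Real.exp (-(α * (s + t)) - Lam x (s + t)) * f (φ x (s + t)) :=
          intervalIntegral.integral_const_mul _ _
      _ = Real.exp (α * t + Lam x t) * ∫ s in t..T,
            Real.exp (-(α * s) - Lam x s) * f (φ x s) := by
          have h2 := intervalIntegral.integral_comp_add_right (a := (0:ℝ)) (b := T - t)
            (fun u => Real.exp (-(α * u) - Lam x u) * f (φ x u)) t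
          have h3 : T - t + t = T := by ring
          simp only [zero_add, h3] at h2
          rw [h2]
      _ = Real.exp (α * t + Lam x t) * (F x T - F x t) := by
          rw [hFx_T, hFx_t, intervalIntegral.integral_interval_sub_left
            (hGf_II 0 T le_rfl hT0 le_rfl) (hGf_II 0 t le_rfl ht htT.le)]
  -- key transformation for Iop
  have key3 : Iop w (φ x t) (T - t) = Real.exp (α * t + Lam x t) * (Iop w x T - Iop w x t) := by
    rw [hIop_def w (φ x t) (T - t), htshift, min_self]
    calc (∫ s in (0:ℝ)..(T - t),
            Real.exp (-(α * s) - Lam (φ x t) s) * lam (φ (φ x t) s) * Qop w (φ (φ x t) s))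
        = ∫ s in (0:ℝ)..(T - t), Real.exp (α * t + Lam x t) *
            (Real.exp (-(α * (s + t)) - Lam x (s + t)) * lam (φ x (s + t)) *
              Qop w (φ x (s + t))) := by
          apply intervalIntegral.integral_congr
          intro s _
          beta_reduce
          rw [← hφ_group x t s, hLam_shift s, ← mul_assoc, ← mul_assoc, ← Real.exp_add]
          congr 3
          ring
      _ = Real.exp (α * t + Lam x t) * ∫ s in (0:ℝ)..(T - t),
            Real.exp (-(α * (s + t)) - Lam x (s + t)) * lam (φ x (s + t)) *
              Qop w (φ x (s + t)) :=
          intervalIntegral.integral_const_mul _ _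
      _ = Real.exp (α * t + Lam x t) * ∫ s in t..T,
            Real.exp (-(α * s) - Lam x s) * lam (φ x s) * Qop w (φ x s) := by
          have h2 := intervalIntegral.integral_comp_add_right (a := (0:ℝ)) (b := T - t)
            (fun u => Real.exp (-(α * u) - Lam x u) * lam (φ x u) * Qop w (φ x u)) t
          have h3 : T - t + t = T := by ring
          simp only [zero_add, h3] at h2
          rw [h2]
      _ = Real.exp (α * t + Lam x t) * (Iop w x T - Iop w x t) := by
          rw [hIx_T, hIx_t, intervalIntegral.integral_interval_sub_left
            (hGi_II 0 T le_rfl hT0 le_rfl) (hGi_II 0 t le_rfl ht htT.le)]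
  -- key transformation for H
  have key2 : H (Qop w) (φ x t) (T - t) = Real.exp (α * t + Lam x t) * H (Qop w) x T := by
    rw [hH_def, hH_def, htshift, min_self, min_self, hLam_shift, ← hφ_group x t (T - t)]
    have h3 : T - t + t = T := by ring
    rw [h3, ← mul_assoc, ← Real.exp_add]
    congr 2
    ring
  -- assemble
  have hKxt := hK_def w (φ x t)
  rw [htshift] at hKxt
  rw [hKxt, key1, key2, key3, hK_def w x]
  rw [← hT]
  ring
end
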